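/- Let μ be an ε-product probability measure on V = V₁×⋯×V_k, let S,T ⊆ [k] with S ⊄ T, let f : V → ℝ, and let g : V → ℝ be a T-junta (i.e., g(x) depends only on x_T). Then ⟨f^{=S}, g⟩ ≤ ε·√(|S|·|T|)·2^{|S|}·‖f‖₂·‖g‖₂. -/

import Mathlib

open Finset

namespace GLL

variable {k : ℕ} {V : Fin k → Type} [∀ i, Fintype (V i)] [∀ i, DecidableEq (V i)]

/-- Expectation of `f` with respect to the (finitely supported) measure `μ`. -/
def expect (μ f : (∀ i, V i) → ℝ) : ℝ := ∑ x, μ x * f x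

/-- `μ` is a probability measure. -/
def IsProb (μ : (∀ i, V i) → ℝ) : Prop := (∀ x, 0 ≤ μ x) ∧ ∑ x, μ x = 1

/-- The marginal `μ_S` evaluated at (the `S`-coordinates of) `x`. -/
def marg (μ : (∀ i, V i) → ℝ) (S : Finset (Fin k)) (x : ∀ i, V i) : ℝ :=
  ∑ z, if ∀ i ∈ S, z i = x i then μ z else 0

/-- The link (conditional) measure `μ_x` for `x ∈ V_S`, viewed as a measure on
full points agreeing with `x` on `S`. -/
noncomputable def cond (μ : (∀ i, V i) → ℝ) (S : Finset (Fin k)) (x z : ∀ i, V i) : ℝ :=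
  if ∀ i ∈ S, z i = x i then μ z / marg μ S x else 0

/-- The averaging operator `A_S`: `A_S f (x) = E_{y ∼ μ_{x_S}} [f(x_S, y)]`.
Applied to an `S'`-junta `f`, this is also the operator `A_{S',S}`. -/
noncomputable def Aop (μ : (∀ i, V i) → ℝ) (S : Finset (Fin k)) (f : (∀ i, V i) → ℝ)
    (x : ∀ i, V i) : ℝ :=
  ∑ z, cond μ S x z * f z

/-- The Efron–Stein component `f^{=S} = ∑_{T ⊆ S} (-1)^{|S∖T|} A_T f`. -/
noncomputable def ES (μ : (∀ i, V i) → ℝ) (S : Finset (Fin k)) (f : (∀ i, V i) → ℝ)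
    (x : ∀ i, V i) : ℝ :=
  ∑ T ∈ S.powerset, (-1 : ℝ) ^ (S.card - T.card) * Aop μ T f x

/-- The low-degree part `f^{≤ d} = ∑_{|S| ≤ d} f^{=S}`. -/
noncomputable def lowPart (μ : (∀ i, V i) → ℝ) (d : ℕ) (f : (∀ i, V i) → ℝ)
    (x : ∀ i, V i) : ℝ :=
  ∑ S ∈ univ.powerset.filter (fun S : Finset (Fin k) => S.card ≤ d), ES μ S f x

/-- The Laplacian `L_S[f] = ∑_{T ⊇ S} f^{=T}`. -/
noncomputable def Lap (μ : (∀ i, V i) → ℝ) (S : Finset (Fin k)) (f : (∀ i, V i) → ℝ)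
    (x : ∀ i, V i) : ℝ :=
  ∑ T ∈ univ.powerset.filter (fun T : Finset (Fin k) => S ⊆ T), ES μ T f x

/-- The truncated Laplacian `L_S^{≤d}[f] = ∑_{T ⊇ S, |T| ≤ d} f^{=T}`. -/
noncomputable def LapLe (μ : (∀ i, V i) → ℝ) (d : ℕ) (S : Finset (Fin k))
    (f : (∀ i, V i) → ℝ) (x : ∀ i, V i) : ℝ :=
  ∑ T ∈ univ.powerset.filter (fun T : Finset (Fin k) => S ⊆ T ∧ T.card ≤ d), ES μ T f x

/-- The influence `I_{S,x}[f] = ‖L_S[f](x,·)‖²_{L²(μ_x)}`. -/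
noncomputable def Inf (μ : (∀ i, V i) → ℝ) (S : Finset (Fin k)) (f : (∀ i, V i) → ℝ)
    (x : ∀ i, V i) : ℝ :=
  ∑ z, cond μ S x z * (Lap μ S f z) ^ 2

/-- The truncated influence `I^{≤d}_{S,x}[f] = ‖L_S^{≤d}[f](x,·)‖²_{L²(μ_x)}`. -/
noncomputable def InfLe (μ : (∀ i, V i) → ℝ) (d : ℕ) (S : Finset (Fin k))
    (f : (∀ i, V i) → ℝ) (x : ∀ i, V i) : ℝ :=
  ∑ z, cond μ S x z * (LapLe μ d S f z) ^ 2

/-- `‖f‖₂²` with respect to `μ`. -/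
def normSq (μ f : (∀ i, V i) → ℝ) : ℝ := ∑ x, μ x * (f x) ^ 2

/-- `‖f‖₄⁴` with respect to `μ`. -/
def norm4p4 (μ f : (∀ i, V i) → ℝ) : ℝ := ∑ x, μ x * (f x) ^ 4

/-- `‖f‖₂` with respect to `μ`. -/
noncomputable def l2norm (μ f : (∀ i, V i) → ℝ) : ℝ := Real.sqrt (normSq μ f)

/-- `‖f‖_∞`: the maximum of `|f|` over the support of `μ`. -/
noncomputable def supNorm (μ f : (∀ i, V i) → ℝ) : ℝ :=
  sSup ((fun x => |f x|) '' {x | 0 < μ x})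

/-- Inner product `⟨f, g⟩ = E_{x∼μ}[f(x) g(x)]`. -/
def inner' (μ f g : (∀ i, V i) → ℝ) : ℝ := ∑ x, μ x * (f x * g x)

/-- The pair `{i,j}`-skeleton of `μ` is `ε`-pseudorandom. -/
def PairPseudo (μ : (∀ i, V i) → ℝ) (ε : ℝ) (i j : Fin k) : Prop :=
  ∀ (f₁ : V i → ℝ) (f₂ : V j → ℝ),
    |expect μ (fun x => f₁ (x i) * f₂ (x j)) -
        expect μ (fun x => f₁ (x i)) * expect μ (fun x => f₂ (x j))| ≤
      ε * Real.sqrt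
        ((expect μ (fun x => f₁ (x i) ^ 2) - expect μ (fun x => f₁ (x i)) ^ 2) *
          (expect μ (fun x => f₂ (x j) ^ 2) - expect μ (fun x => f₂ (x j)) ^ 2))

/-- `μ` is an `ε`-product measure: every link of every restriction of size `≤ k - 2`
has `ε`-pseudorandom skeletons. -/
def EpsProduct (μ : (∀ i, V i) → ℝ) (ε : ℝ) : Prop :=
  ∀ S : Finset (Fin k), S.card ≤ k - 2 → ∀ x, 0 < marg μ S x →
    ∀ i j : Fin k, i ∉ S → j ∉ S → i ≠ j → PairPseudo (cond μ S x) ε i j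

/-- `‖f(x,·)‖_{L²(μ_x)}` for `x ∈ V_S`. -/
noncomputable def restrictNorm (μ : (∀ i, V i) → ℝ) (S : Finset (Fin k)) (x : ∀ i, V i)
    (f : (∀ i, V i) → ℝ) : ℝ :=
  Real.sqrt (∑ z, cond μ S x z * (f z) ^ 2)

/-- `f` is `(d, δ)`-global: all restrictions of at most `d` coordinates have
`2`-norm at most `δ`. -/
def IsGlobal (μ : (∀ i, V i) → ℝ) (d : ℕ) (δ : ℝ) (f : (∀ i, V i) → ℝ) : Prop :=
  ∀ S : Finset (Fin k), S.card ≤ d → ∀ x, 0 < marg μ S x → restrictNorm μ S x f ≤ δ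

/-- `f` is an `S`-junta: it depends only on the coordinates in `S`. -/
def Junta (S : Finset (Fin k)) (f : (∀ i, V i) → ℝ) : Prop :=
  ∀ x y, (∀ i ∈ S, x i = y i) → f x = f y

/-- The noise operator `T_ρ f = ∑_{S ⊆ [k]} ρ^{|S|} (1-ρ)^{k-|S|} A_S f`. -/
noncomputable def noiseOp (μ : (∀ i, V i) → ℝ) (ρ : ℝ) (f : (∀ i, V i) → ℝ)
    (x : ∀ i, V i) : ℝ :=
  ∑ S ∈ (univ : Finset (Fin k)).powerset, ρ ^ S.card * (1 - ρ) ^ (k - S.card) * Aop μ S f x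

/-- The up-down walk operator `T = (1/k) ∑_{i=1}^k A_{[k]∖{i}}`. -/
noncomputable def upDown (μ : (∀ i, V i) → ℝ) (f : (∀ i, V i) → ℝ) (x : ∀ i, V i) : ℝ :=
  (1 / (k : ℝ)) * ∑ i : Fin k, Aop μ (univ.erase i) f x

/-- The product measure `μ₁ ⊗ ⋯ ⊗ μ_k`. -/
def prodMeasure (μi : ∀ i, V i → ℝ) : (∀ i, V i) → ℝ := fun x => ∏ i, μi i (x i)

/-- `f` has degree at most `d`: `f^{=S} = 0` whenever `|S| > d`. -/
def DegLe (μ : (∀ i, V i) → ℝ) (d : ℕ) (f : (∀ i, V i) → ℝ) : Prop :=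
  ∀ S : Finset (Fin k), d < S.card → ∀ x, ES μ S f x = 0

/-- `{F S}_{S ⊆ [k]}` is an `(α, ε')`-approximate Efron–Stein decomposition of `f`. -/
noncomputable def ApproxES (μ : (∀ i, V i) → ℝ) (α ε' : ℝ) (f : (∀ i, V i) → ℝ)
    (F : Finset (Fin k) → (∀ i, V i) → ℝ) : Prop :=
  l2norm μ f ≤ α ∧
    l2norm μ (fun x => f x - ∑ S ∈ (univ : Finset (Fin k)).powerset, F S x) ≤ ε' ∧
    ∀ S : Finset (Fin k), ∃ h : (∀ i, V i) → ℝ,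
      l2norm μ h ≤ α ∧ l2norm μ (fun x => ES μ S h x - F S x) ≤ ε'

end GLL

/-!
Pick `i ∈ S \ T`. Pairing `R` with `insert i R` shows that
`∑_{R ⊆ S} (-1)^{|S∖R|} ⟨A_{R∩T} f, g⟩ = 0`, so `⟨f^{=S}, g⟩` is an alternating sum of the
`2^{|S|}` terms `⟨A_R f - A_{R∩T} f, g⟩`, and each of them is at most `ε √(|R||T|) ‖f‖ ‖g‖`.

Adding the coordinates of `R \ T` to `R ∩ T` one at a time splits `A_R f - A_{R∩T} f` into
orthogonal increments `h = A_{Q+l} f - A_Q f`, each a `(Q+l)`-junta with `A_Q h = 0`. On the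
support of `μ`, `g = A_{Q∪T} g`, and adding the coordinates of `T \ Q` to `Q` one at a time splits
`g` into increments `A_{P+j} g - A_P g`, orthogonal conditionally on `x_Q`. The correlation of `h`
with one of them is an average, over links `μ_y` with `y ∈ V_P`, of correlations across the
`ε`-pseudorandom `{l, j}`-skeleton of `μ_y`; Cauchy–Schwarz over the two telescopes produces the
factors `√|T|` and `√|R|`.
-/

namespace GLL

open Real

lemma sum_mul_add_sq {ι : Type*} [Fintype ι] (w u v : ι → ℝ)
    (h : ∑ i, w i * (u i * v i) = 0) :
    ∑ i, w i * (u i + v i) ^ 2 = ∑ i, w i * u i ^ 2 + ∑ i, w i * v i ^ 2 :=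
  calc ∑ i, w i * (u i + v i) ^ 2
      = ∑ i, w i * u i ^ 2 + 2 * ∑ i, w i * (u i * v i) + ∑ i, w i * v i ^ 2 := by
        rw [mul_sum, ← sum_add_distrib, ← sum_add_distrib]
        exact sum_congr rfl fun i _ => by ring
    _ = ∑ i, w i * u i ^ 2 + ∑ i, w i * v i ^ 2 := by rw [h]; ring

lemma mul_add_mul_le_sqrt_mul_sqrt (a b c d : ℝ) :
    a * c + b * d ≤ √(a ^ 2 + b ^ 2) * √(c ^ 2 + d ^ 2) := by
  rw [← sqrt_mul (by positivity)]
  exact le_sqrt_of_sq_le (by nlinarith [sq_nonneg (a * d - b * c)])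

lemma abs_add_le_mul_sqrt_succ {x y c m b d : ℝ} (hc : 0 ≤ c) (hm : 0 ≤ m)
    (hx : |x| ≤ c * (√m * b)) (hy : |y| ≤ c * d) :
    |x + y| ≤ c * (√(m + 1) * √(b ^ 2 + d ^ 2)) :=
  calc |x + y| ≤ |x| + |y| := abs_add_le x y
    _ ≤ c * (√m * b + 1 * d) := by linarith
    _ ≤ c * (√(√m ^ 2 + 1 ^ 2) * √(b ^ 2 + d ^ 2)) :=
      mul_le_mul_of_nonneg_left (mul_add_mul_le_sqrt_mul_sqrt _ _ _ _) hc
    _ = c * (√(m + 1) * √(b ^ 2 + d ^ 2)) := by rw [sq_sqrt hm, one_pow]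

lemma abs_sum_mul_le_of_le_mul_sqrt {ι : Type*} [Fintype ι] {w a b d : ι → ℝ} {c : ℝ}
    (hw : ∀ i, 0 ≤ w i) (hc : 0 ≤ c) (hb : ∀ i, 0 ≤ b i) (hd : ∀ i, 0 ≤ d i)
    (h : ∀ i, |a i| ≤ c * (√(b i) * √(d i))) :
    |∑ i, w i * a i| ≤ c * (√(∑ i, w i * b i) * √(∑ i, w i * d i)) :=
  calc |∑ i, w i * a i| ≤ ∑ i, |w i * a i| := abs_sum_le_sum_abs _ _
    _ ≤ ∑ i, w i * (c * (√(b i) * √(d i))) := sum_le_sum fun i _ => by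
      rw [abs_mul, abs_of_nonneg (hw i)]
      exact mul_le_mul_of_nonneg_left (h i) (hw i)
    _ = c * ∑ i, √(w i * b i) * √(w i * d i) := by
      rw [mul_sum]
      refine sum_congr rfl fun i _ => ?_
      rw [sqrt_mul (hw i), sqrt_mul (hw i)]
      linear_combination -(c * √(b i) * √(d i)) * mul_self_sqrt (hw i)
    _ ≤ c * (√(∑ i, w i * b i) * √(∑ i, w i * d i)) :=
      mul_le_mul_of_nonneg_left (sum_sqrt_mul_sqrt_le _ (fun i => mul_nonneg (hw i) (hb i))
        fun i => mul_nonneg (hw i) (hd i)) hc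

lemma sum_powerset_neg_one_pow_mul_inter_eq_zero {ι α : Type*} [DecidableEq ι] [CommRing α]
    {S T : Finset ι} {i : ι} (hiS : i ∈ S) (hiT : i ∉ T) (c : Finset ι → α) :
    ∑ R ∈ S.powerset, (-1 : α) ^ (S.card - R.card) * c (R ∩ T) = 0 := by
  have hi : i ∉ S.erase i := notMem_erase i S
  rw [← insert_erase hiS, sum_powerset_insert hi, ← sum_add_distrib]
  refine sum_eq_zero fun R hR => ?_
  have hiR : i ∉ R := fun h => hi (mem_powerset.1 hR h)
  have hcard := card_le_card (mem_powerset.1 hR)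
  rw [insert_inter_of_notMem hiT, card_insert_of_notMem hi, card_insert_of_notMem hiR,
    Nat.add_sub_add_right, Nat.sub_add_comm hcard, pow_succ]
  ring

lemma card_le_sub_two {k : ℕ} {P : Finset (Fin k)} {i j : Fin k} (hi : i ∉ P) (hj : j ∉ P)
    (hij : i ≠ j) : P.card ≤ k - 2 := by
  have h := card_le_univ (insert i (insert j P))
  rw [card_insert_of_notMem (by simp [hij, hi]), card_insert_of_notMem hj,
    Fintype.card_fin] at h
  omega

variable {k : ℕ} {V : Fin k → Type}

lemma Junta.mono {S S' : Finset (Fin k)} (h : S ⊆ S') {f : (∀ i, V i) → ℝ}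
    (hf : Junta S f) : Junta S' f :=
  fun x y hxy => hf x y fun i hi => hxy i (h hi)

lemma Junta.sub {S : Finset (Fin k)} {f g : (∀ i, V i) → ℝ} (hf : Junta S f)
    (hg : Junta S g) : Junta S (fun z => f z - g z) :=
  fun x y h => by simp only [hf x y h, hg x y h]

lemma Junta.eq_update {P : Finset (Fin k)} {i : Fin k} (hi : i ∉ P) {φ : (∀ i, V i) → ℝ}
    (hφ : Junta (insert i P) φ) {y z : ∀ i, V i} (hz : ∀ l ∈ P, z l = y l) :
    φ z = φ (Function.update y i (z i)) :=
  hφ z _ fun l hl => by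
    rcases mem_insert.1 hl with rfl | hl
    · rw [Function.update_self]
    · rw [Function.update_of_ne (ne_of_mem_of_not_mem hl hi), hz l hl]

section Expectation

variable [∀ i, Fintype (V i)] {μ : (∀ i, V i) → ℝ} {ε : ℝ}

lemma expect_congr {ν F G : (∀ i, V i) → ℝ} (h : ∀ x, ν x ≠ 0 → F x = G x) :
    expect ν F = expect ν G :=
  sum_congr rfl fun x _ => by
    by_cases hx : ν x = 0
    · rw [hx, zero_mul, zero_mul]
    · rw [h x hx]

lemma inner'_add_left (u v g : (∀ i, V i) → ℝ) :
    inner' μ (fun z => u z + v z) g = inner' μ u g + inner' μ v g := by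
  simp only [inner', add_mul, mul_add, sum_add_distrib]

lemma inner'_sub_left (u v g : (∀ i, V i) → ℝ) :
    inner' μ (fun z => u z - v z) g = inner' μ u g - inner' μ v g := by
  simp only [inner', sub_mul, mul_sub, sum_sub_distrib]

lemma normSq_nonneg (hμ0 : ∀ x, 0 ≤ μ x) (f : (∀ i, V i) → ℝ) : 0 ≤ normSq μ f :=
  sum_nonneg fun x _ => mul_nonneg (hμ0 x) (sq_nonneg _)

lemma l2norm_add_of_inner'_eq_zero (hμ0 : ∀ x, 0 ≤ μ x) {u v : (∀ i, V i) → ℝ}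
    (h : inner' μ u v = 0) :
    l2norm μ (fun z => u z + v z) = √(l2norm μ u ^ 2 + l2norm μ v ^ 2) := by
  rw [l2norm, l2norm, l2norm, sq_sqrt (normSq_nonneg hμ0 u), sq_sqrt (normSq_nonneg hμ0 v)]
  exact congrArg Real.sqrt (sum_mul_add_sq μ u v h)

lemma abs_expect_mul_le_of_pairPseudo {ν : (∀ i, V i) → ℝ} (hν : ∀ x, 0 ≤ ν x) (hε : 0 ≤ ε)
    {i j : Fin k} (hpr : PairPseudo ν ε i j) (f₁ : V i → ℝ) (f₂ : V j → ℝ)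
    (h₂ : expect ν (fun x => f₂ (x j)) = 0) :
    |expect ν (fun x => f₁ (x i) * f₂ (x j))| ≤
      ε * (√(expect ν (fun x => f₁ (x i) ^ 2)) * √(expect ν (fun x => f₂ (x j) ^ 2))) := by
  have hsq : ∀ {l} (F : V l → ℝ), 0 ≤ expect ν (fun x => F (x l) ^ 2) :=
    fun F => sum_nonneg fun x _ => mul_nonneg (hν x) (sq_nonneg _)
  have h := hpr f₁ f₂
  rw [h₂, mul_zero, sub_zero, zero_pow two_ne_zero, sub_zero] at h
  rw [← sqrt_mul (hsq f₁)]
  refine h.trans (mul_le_mul_of_nonneg_left (sqrt_le_sqrt ?_) hε)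
  exact mul_le_mul_of_nonneg_right (sub_le_self _ (sq_nonneg _)) (hsq f₂)

end Expectation

section Links

variable [∀ i, Fintype (V i)] [∀ i, DecidableEq (V i)] {μ : (∀ i, V i) → ℝ} {ε : ℝ}

lemma marg_nonneg (hμ0 : ∀ x, 0 ≤ μ x) (S : Finset (Fin k)) (x : ∀ i, V i) :
    0 ≤ marg μ S x :=
  sum_nonneg fun z _ => ite_nonneg (hμ0 z) le_rfl

lemma marg_congr {S : Finset (Fin k)} {x y : ∀ i, V i} (h : ∀ i ∈ S, x i = y i) :
    marg μ S x = marg μ S y :=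
  sum_congr rfl fun _ _ => if_congr (forall₂_congr fun i hi => by rw [h i hi]) rfl rfl

lemma self_le_marg (hμ0 : ∀ x, 0 ≤ μ x) (S : Finset (Fin k)) (x : ∀ i, V i) :
    μ x ≤ marg μ S x :=
  calc μ x = if ∀ i ∈ S, x i = x i then μ x else 0 := by simp
    _ ≤ marg μ S x :=
      single_le_sum (f := fun z => if ∀ i ∈ S, z i = x i then μ z else 0)
        (fun z _ => ite_nonneg (hμ0 z) le_rfl) (mem_univ x)

lemma marg_ne_zero_of_ne_zero (hμ0 : ∀ x, 0 ≤ μ x) (S : Finset (Fin k)) {x : ∀ i, V i}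
    (hx : μ x ≠ 0) : marg μ S x ≠ 0 :=
  fun h => hx (le_antisymm (h ▸ self_le_marg hμ0 S x) (hμ0 x))

lemma cond_nonneg (hμ0 : ∀ x, 0 ≤ μ x) (S : Finset (Fin k)) (x z : ∀ i, V i) :
    0 ≤ cond μ S x z :=
  ite_nonneg (div_nonneg (hμ0 z) (marg_nonneg hμ0 S x)) le_rfl

lemma sum_cond_eq_one {S : Finset (Fin k)} {x : ∀ i, V i} (h : marg μ S x ≠ 0) :
    ∑ z, cond μ S x z = 1 := by
  have hcond : ∀ z, cond μ S x z = (if ∀ i ∈ S, z i = x i then μ z else 0) / marg μ S x :=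
    fun z => by unfold cond; split_ifs <;> simp
  rw [sum_congr rfl fun z _ => hcond z, ← sum_div]
  exact div_self h

lemma eq_on_of_cond_ne_zero {S : Finset (Fin k)} {x z : ∀ i, V i} (h : cond μ S x z ≠ 0) :
    ∀ i ∈ S, z i = x i := by
  by_contra hc
  exact h (if_neg hc)

lemma mul_cond_comm (S : Finset (Fin k)) (x z : ∀ i, V i) :
    μ x * cond μ S x z = μ z * cond μ S z x := by
  unfold cond
  by_cases h : ∀ i ∈ S, z i = x i
  · rw [if_pos h, if_pos fun i hi => (h i hi).symm, marg_congr fun i hi => (h i hi).symm]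
    ring
  · rw [if_neg h, if_neg fun hc => h fun i hi => (hc i hi).symm, mul_zero, mul_zero]

lemma sum_mul_cond (hμ0 : ∀ x, 0 ≤ μ x) (S : Finset (Fin k)) (z : ∀ i, V i) :
    ∑ x, μ x * cond μ S x z = μ z := by
  simp_rw [mul_cond_comm S _ z, ← mul_sum]
  by_cases hz : μ z = 0
  · rw [hz, zero_mul]
  · rw [sum_cond_eq_one (marg_ne_zero_of_ne_zero hμ0 S hz), mul_one]

lemma cond_mul_cond {Q P : Finset (Fin k)} (hQP : Q ⊆ P) (x z w : ∀ i, V i) :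
    cond μ Q x z * cond μ P z w = cond μ Q x w * cond μ P w z := by
  unfold cond
  by_cases hzw : ∀ i ∈ P, z i = w i
  · rw [if_pos fun i hi => (hzw i hi).symm, if_pos hzw, marg_congr hzw]
    by_cases hw : ∀ i ∈ Q, w i = x i
    · rw [if_pos hw, if_pos fun i hi => (hzw i (hQP hi)).trans (hw i hi)]
      ring
    · rw [if_neg hw, if_neg fun hz => hw fun i hi => (hzw i (hQP hi)).symm.trans (hz i hi)]
      ring
  · have hwz : ¬∀ i ∈ P, w i = z i := fun h => hzw fun i hi => (h i hi).symm
    rw [if_neg hwz, if_neg hzw, mul_zero, mul_zero]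

lemma sum_cond_mul_cond (hμ0 : ∀ x, 0 ≤ μ x) {Q P : Finset (Fin k)} (hQP : Q ⊆ P)
    (x w : ∀ i, V i) : ∑ z, cond μ Q x z * cond μ P z w = cond μ Q x w := by
  simp_rw [cond_mul_cond hQP x _ w, ← mul_sum]
  by_cases hw : μ w = 0
  · simp [cond, hw]
  · rw [sum_cond_eq_one (marg_ne_zero_of_ne_zero hμ0 P hw), mul_one]

lemma Aop_add (Q : Finset (Fin k)) (u v : (∀ i, V i) → ℝ) (x : ∀ i, V i) :
    Aop μ Q (fun z => u z + v z) x = Aop μ Q u x + Aop μ Q v x := by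
  simp only [Aop, mul_add, sum_add_distrib]

lemma Aop_sub (Q : Finset (Fin k)) (u v : (∀ i, V i) → ℝ) (x : ∀ i, V i) :
    Aop μ Q (fun z => u z - v z) x = Aop μ Q u x - Aop μ Q v x := by
  simp only [Aop, mul_sub, sum_sub_distrib]

lemma Aop_sq_nonneg (hμ0 : ∀ x, 0 ≤ μ x) (Q : Finset (Fin k)) (u : (∀ i, V i) → ℝ)
    (x : ∀ i, V i) : 0 ≤ Aop μ Q (fun z => u z ^ 2) x :=
  sum_nonneg fun z _ => mul_nonneg (cond_nonneg hμ0 Q x z) (sq_nonneg _)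

lemma Aop_eq_zero_of_marg_eq_zero {P : Finset (Fin k)} {y : ∀ i, V i} (hy : marg μ P y = 0)
    (F : (∀ i, V i) → ℝ) : Aop μ P F y = 0 := by
  simp [Aop, cond, hy]

lemma Aop_eq_sum_cond_mul_Aop (hμ0 : ∀ x, 0 ≤ μ x) {Q P : Finset (Fin k)} (hQP : Q ⊆ P)
    (F : (∀ i, V i) → ℝ) (x : ∀ i, V i) :
    Aop μ Q F x = ∑ y, cond μ Q x y * Aop μ P F y := by
  simp only [Aop, mul_sum]
  rw [sum_comm]
  simp_rw [← mul_assoc, ← sum_mul, sum_cond_mul_cond hμ0 hQP]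

lemma Aop_Aop (hμ0 : ∀ x, 0 ≤ μ x) {Q P : Finset (Fin k)} (hQP : Q ⊆ P)
    (F : (∀ i, V i) → ℝ) (x : ∀ i, V i) : Aop μ Q (Aop μ P F) x = Aop μ Q F x :=
  (Aop_eq_sum_cond_mul_Aop hμ0 hQP F x).symm

lemma sum_mul_Aop (hμ0 : ∀ x, 0 ≤ μ x) (Q : Finset (Fin k)) (F : (∀ i, V i) → ℝ) :
    ∑ x, μ x * Aop μ Q F x = ∑ x, μ x * F x := by
  simp only [Aop, mul_sum]
  rw [sum_comm]
  simp_rw [← mul_assoc, ← sum_mul, sum_mul_cond hμ0]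

lemma Aop_increment_eq_zero (hμ0 : ∀ x, 0 ≤ μ x) {R P P' : Finset (Fin k)} (hRP : R ⊆ P)
    (hPP' : P ⊆ P') (f : (∀ i, V i) → ℝ) (y : ∀ i, V i) :
    Aop μ R (fun z => Aop μ P' f z - Aop μ P f z) y = 0 := by
  rw [Aop_sub, Aop_Aop hμ0 (hRP.trans hPP'), Aop_Aop hμ0 hRP, sub_self]

variable (μ) in
lemma junta_Aop (Q : Finset (Fin k)) (F : (∀ i, V i) → ℝ) : Junta Q (Aop μ Q F) :=
  fun x y hxy => sum_congr rfl fun z _ => by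
    unfold cond
    rw [marg_congr hxy]
    congr 2
    exact propext (forall₂_congr fun i hi => by rw [hxy i hi])

lemma Aop_junta_mul {P : Finset (Fin k)} {u : (∀ i, V i) → ℝ} (hu : Junta P u)
    (v : (∀ i, V i) → ℝ) (y : ∀ i, V i) :
    Aop μ P (fun z => u z * v z) y = u y * Aop μ P v y := by
  simp only [Aop, mul_sum]
  refine sum_congr rfl fun z _ => ?_
  by_cases h : cond μ P y z = 0
  · rw [h]; ring
  · rw [hu z y (eq_on_of_cond_ne_zero h)]; ring

lemma Aop_of_junta (hμ0 : ∀ x, 0 ≤ μ x) {P : Finset (Fin k)} {g : (∀ i, V i) → ℝ}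
    (hg : Junta P g) {x : ∀ i, V i} (hx : μ x ≠ 0) : Aop μ P g x = g x := by
  have h := Aop_junta_mul (μ := μ) hg (fun _ => 1) x
  simp only [mul_one] at h
  rw [h, Aop]
  simp [sum_cond_eq_one (marg_ne_zero_of_ne_zero hμ0 P hx)]

lemma Aop_mul_eq_zero_of_junta (hμ0 : ∀ x, 0 ≤ μ x) {Q P : Finset (Fin k)} (hQP : Q ⊆ P)
    {u v : (∀ i, V i) → ℝ} (hu : Junta P u) (hv : ∀ y, Aop μ P v y = 0) (x : ∀ i, V i) :
    Aop μ Q (fun z => u z * v z) x = 0 := by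
  simp [Aop_eq_sum_cond_mul_Aop hμ0 hQP _ x, Aop_junta_mul hu, hv]

lemma inner'_eq_zero_of_junta (hμ0 : ∀ x, 0 ≤ μ x) {P : Finset (Fin k)}
    {u v : (∀ i, V i) → ℝ} (hu : Junta P u) (hv : ∀ y, Aop μ P v y = 0) :
    inner' μ u v = 0 := by
  simp [inner', ← sum_mul_Aop hμ0 P, Aop_junta_mul hu, hv]

lemma restrictNorm_eq_sqrt_Aop (S : Finset (Fin k)) (x : ∀ i, V i) (f : (∀ i, V i) → ℝ) :
    restrictNorm μ S x f = √(Aop μ S (fun z => f z ^ 2) x) := rfl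

lemma restrictNorm_add_of_Aop_mul_eq_zero (hμ0 : ∀ x, 0 ≤ μ x) {Q : Finset (Fin k)}
    {x : ∀ i, V i} {u v : (∀ i, V i) → ℝ} (h : Aop μ Q (fun z => u z * v z) x = 0) :
    restrictNorm μ Q x (fun z => u z + v z) =
      √(restrictNorm μ Q x u ^ 2 + restrictNorm μ Q x v ^ 2) := by
  rw [restrictNorm_eq_sqrt_Aop, restrictNorm_eq_sqrt_Aop, restrictNorm_eq_sqrt_Aop,
    sq_sqrt (Aop_sq_nonneg hμ0 Q u x), sq_sqrt (Aop_sq_nonneg hμ0 Q v x)]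
  exact congrArg Real.sqrt (sum_mul_add_sq (cond μ Q x) u v h)

lemma l2norm_Aop_le (hμ0 : ∀ x, 0 ≤ μ x) (P : Finset (Fin k)) (f : (∀ i, V i) → ℝ) :
    l2norm μ (Aop μ P f) ≤ l2norm μ f := by
  have hf : ∀ y, Aop μ P (fun z => f z - Aop μ P f z) y = 0 := fun y => by
    rw [Aop_sub, Aop_Aop hμ0 subset_rfl, sub_self]
  have h := l2norm_add_of_inner'_eq_zero hμ0 (inner'_eq_zero_of_junta hμ0 (junta_Aop μ P f) hf)
  simp only [add_sub_cancel] at h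
  rw [h]
  exact le_sqrt_of_sq_le (le_add_of_nonneg_right (sq_nonneg _))

lemma l2norm_increment_le (hμ0 : ∀ x, 0 ≤ μ x) {P P' : Finset (Fin k)} (hPP' : P ⊆ P')
    (f : (∀ i, V i) → ℝ) :
    l2norm μ (fun z => Aop μ P' f z - Aop μ P f z) ≤ l2norm μ f := by
  have h := l2norm_add_of_inner'_eq_zero hμ0 (inner'_eq_zero_of_junta hμ0 (junta_Aop μ P f)
    (Aop_increment_eq_zero hμ0 subset_rfl hPP' f))
  simp only [add_sub_cancel] at h
  calc l2norm μ (fun z => Aop μ P' f z - Aop μ P f z)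
      ≤ √(l2norm μ (Aop μ P f) ^ 2 + l2norm μ (fun z => Aop μ P' f z - Aop μ P f z) ^ 2) :=
        le_sqrt_of_sq_le (le_add_of_nonneg_left (sq_nonneg _))
    _ = l2norm μ (Aop μ P' f) := h.symm
    _ ≤ l2norm μ f := l2norm_Aop_le hμ0 P' f

lemma abs_Aop_mul_le_of_pairPseudo (hμ0 : ∀ x, 0 ≤ μ x) (hε : 0 ≤ ε) {P : Finset (Fin k)}
    {i j : Fin k} {y : ∀ i, V i} (hpr : PairPseudo (cond μ P y) ε i j) (hi : i ∉ P)
    (hj : j ∉ P) {φ ψ : (∀ i, V i) → ℝ} (hφ : Junta (insert i P) φ)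
    (hψ : Junta (insert j P) ψ) (hψ0 : Aop μ P ψ y = 0) :
    |Aop μ P (fun z => φ z * ψ z) y| ≤
      ε * (restrictNorm μ P y φ * restrictNorm μ P y ψ) := by
  have hφ' : ∀ z, cond μ P y z ≠ 0 → φ z = φ (Function.update y i (z i)) :=
    fun z hz => hφ.eq_update hi (eq_on_of_cond_ne_zero hz)
  have hψ' : ∀ z, cond μ P y z ≠ 0 → ψ z = ψ (Function.update y j (z j)) :=
    fun z hz => hψ.eq_update hj (eq_on_of_cond_ne_zero hz)
  have key := abs_expect_mul_le_of_pairPseudo (cond_nonneg hμ0 P y) hε hpr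
    (fun a => φ (Function.update y i a)) (fun b => ψ (Function.update y j b))
    (hψ0 ▸ expect_congr fun z hz => (hψ' z hz).symm)
  have e₁ : expect (cond μ P y) (fun z => φ (Function.update y i (z i)) *
      ψ (Function.update y j (z j))) = Aop μ P (fun z => φ z * ψ z) y :=
    expect_congr fun z hz => by rw [← hφ' z hz, ← hψ' z hz]
  have e₂ : expect (cond μ P y) (fun z => φ (Function.update y i (z i)) ^ 2) =
      Aop μ P (fun z => φ z ^ 2) y :=
    expect_congr fun z hz => by rw [← hφ' z hz]
  have e₃ : expect (cond μ P y) (fun z => ψ (Function.update y j (z j)) ^ 2) =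
      Aop μ P (fun z => ψ z ^ 2) y :=
    expect_congr fun z hz => by rw [← hψ' z hz]
  rwa [e₁, e₂, e₃] at key

lemma abs_Aop_mul_le_of_subset (hμ0 : ∀ x, 0 ≤ μ x) {Q P : Finset (Fin k)} (hQP : Q ⊆ P)
    {c : ℝ} (hc : 0 ≤ c) {u v : (∀ i, V i) → ℝ}
    (h : ∀ y, |Aop μ P (fun z => u z * v z) y| ≤
      c * (restrictNorm μ P y u * restrictNorm μ P y v)) (x : ∀ i, V i) :
    |Aop μ Q (fun z => u z * v z) x| ≤ c * (restrictNorm μ Q x u * restrictNorm μ Q x v) := by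
  rw [restrictNorm_eq_sqrt_Aop, restrictNorm_eq_sqrt_Aop, Aop_eq_sum_cond_mul_Aop hμ0 hQP,
    Aop_eq_sum_cond_mul_Aop hμ0 hQP, Aop_eq_sum_cond_mul_Aop hμ0 hQP]
  exact abs_sum_mul_le_of_le_mul_sqrt (cond_nonneg hμ0 Q x) hc (Aop_sq_nonneg hμ0 P u)
    (Aop_sq_nonneg hμ0 P v) h

lemma abs_Aop_mul_le_of_epsProduct (hμ0 : ∀ x, 0 ≤ μ x) (hε : 0 ≤ ε)
    (hprod : EpsProduct μ ε) {Q P : Finset (Fin k)} (hQP : Q ⊆ P) {i j : Fin k} (hi : i ∉ P)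
    (hj : j ∉ P) (hij : i ≠ j) {φ ψ : (∀ i, V i) → ℝ} (hφ : Junta (insert i P) φ)
    (hψ : Junta (insert j P) ψ) (hψ0 : ∀ y, Aop μ P ψ y = 0) (x : ∀ i, V i) :
    |Aop μ Q (fun z => φ z * ψ z) x| ≤ ε * (restrictNorm μ Q x φ * restrictNorm μ Q x ψ) := by
  refine abs_Aop_mul_le_of_subset hμ0 hQP hε (fun y => ?_) x
  by_cases hy : marg μ P y = 0
  · rw [Aop_eq_zero_of_marg_eq_zero hy, abs_zero]
    exact mul_nonneg hε (mul_nonneg (sqrt_nonneg _) (sqrt_nonneg _))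
  · exact abs_Aop_mul_le_of_pairPseudo hμ0 hε (hprod P (card_le_sub_two hi hj hij) y
      ((marg_nonneg hμ0 P y).lt_of_ne' hy) i j hi hj hij) hi hj hφ hψ (hψ0 y)

lemma abs_Aop_mul_Aop_union_le (hμ0 : ∀ x, 0 ≤ μ x) (hε : 0 ≤ ε) (hprod : EpsProduct μ ε)
    {Q J : Finset (Fin k)} {i : Fin k} (hiQ : i ∉ Q) (hiJ : i ∉ J) (hJQ : Disjoint J Q)
    {h : (∀ i, V i) → ℝ} (hh : Junta (insert i Q) h) (hh0 : ∀ y, Aop μ Q h y = 0)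
    (g : (∀ i, V i) → ℝ) (x : ∀ i, V i) :
    |Aop μ Q (fun z => h z * Aop μ (Q ∪ J) g z) x| ≤
      ε * √J.card * (restrictNorm μ Q x h * restrictNorm μ Q x (Aop μ (Q ∪ J) g)) := by
  induction J using Finset.induction_on with
  | empty =>
    have h0 : Aop μ Q (fun z => Aop μ Q g z * h z) x = 0 :=
      Aop_mul_eq_zero_of_junta hμ0 subset_rfl (junta_Aop μ Q g) hh0 x
    simp_rw [union_empty, mul_comm (h _), h0, abs_zero, card_empty, Nat.cast_zero, sqrt_zero,
      mul_zero, zero_mul, le_refl]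
  | insert j J hjJ ih =>
    obtain ⟨hij, hiJ⟩ := not_or.1 (mt mem_insert.2 hiJ)
    obtain ⟨hjQ, hJQ⟩ := disjoint_insert_left.1 hJQ
    have hQP : Q ⊆ Q ∪ J := subset_union_left
    have hiP : i ∉ Q ∪ J := by simp [hiQ, hiJ]
    have hjP : j ∉ Q ∪ J := by simp [hjQ, hjJ]
    set D := fun z => Aop μ (insert j (Q ∪ J)) g z - Aop μ (Q ∪ J) g z with hD
    have hD0 : ∀ y, Aop μ (Q ∪ J) D y = 0 :=
      Aop_increment_eq_zero hμ0 subset_rfl (subset_insert j _) g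
    have hstep := abs_Aop_mul_le_of_epsProduct (ψ := D) hμ0 hε hprod hQP hiP hjP hij
      (hh.mono (insert_subset_insert i hQP))
      ((junta_Aop μ _ g).sub ((junta_Aop μ _ g).mono (subset_insert j _))) hD0 x
    have horth : Aop μ Q (fun z => Aop μ (Q ∪ J) g z * D z) x = 0 :=
      Aop_mul_eq_zero_of_junta hμ0 hQP (junta_Aop μ _ g) hD0 x
    have hsplit : Aop μ (Q ∪ insert j J) g = fun z => Aop μ (Q ∪ J) g z + D z := by
      funext z
      rw [hD, union_insert]
      ring
    rw [hsplit, restrictNorm_add_of_Aop_mul_eq_zero hμ0 horth, card_insert_of_notMem hjJ,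
      Nat.cast_succ]
    simp_rw [mul_add]
    rw [Aop_add]
    have hG'_le : |Aop μ Q (fun z => h z * Aop μ (Q ∪ J) g z) x| ≤
        ε * restrictNorm μ Q x h * (√J.card * restrictNorm μ Q x (Aop μ (Q ∪ J) g)) :=
      (ih hiJ hJQ).trans_eq (by ring)
    have hD_le : |Aop μ Q (fun z => h z * D z) x| ≤
        ε * restrictNorm μ Q x h * restrictNorm μ Q x D :=
      hstep.trans_eq (by ring)
    exact (abs_add_le_mul_sqrt_succ (c := ε * restrictNorm μ Q x h)
      (mul_nonneg hε (sqrt_nonneg _)) (Nat.cast_nonneg _) hG'_le hD_le).trans_eq (by ring)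

lemma abs_inner'_increment_le (hμ0 : ∀ x, 0 ≤ μ x) (hε : 0 ≤ ε) (hprod : EpsProduct μ ε)
    {Q T : Finset (Fin k)} {i : Fin k} (hiQ : i ∉ Q) (hiT : i ∉ T) (f : (∀ i, V i) → ℝ)
    {g : (∀ i, V i) → ℝ} (hg : Junta T g) :
    |inner' μ (fun z => Aop μ (insert i Q) f z - Aop μ Q f z) g| ≤
      ε * √T.card *
        (l2norm μ (fun z => Aop μ (insert i Q) f z - Aop μ Q f z) * l2norm μ g) := by
  set h := fun z => Aop μ (insert i Q) f z - Aop μ Q f z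
  have hh : Junta (insert i Q) h :=
    (junta_Aop μ _ f).sub ((junta_Aop μ Q f).mono (subset_insert i Q))
  have hh0 : ∀ y, Aop μ Q h y = 0 := Aop_increment_eq_zero hμ0 subset_rfl (subset_insert i Q) f
  set G := Aop μ (Q ∪ T \ Q) g
  have hG : ∀ x, μ x ≠ 0 → G x = g x := fun x hx =>
    Aop_of_junta hμ0 (hg.mono (by rw [union_sdiff_self_eq_union]; exact subset_union_right)) hx
  have hinner : inner' μ h g = ∑ x, μ x * Aop μ Q (fun z => h z * G z) x := by
    rw [sum_mul_Aop hμ0]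
    exact expect_congr fun x hx => by rw [hG x hx]
  have hnorm_h : l2norm μ h = √(∑ x, μ x * Aop μ Q (fun z => h z ^ 2) x) := by
    rw [sum_mul_Aop hμ0]
    rfl
  have hnorm_g : l2norm μ g = √(∑ x, μ x * Aop μ Q (fun z => G z ^ 2) x) := by
    rw [sum_mul_Aop hμ0]
    exact congrArg Real.sqrt (expect_congr fun x hx => by rw [hG x hx])
  rw [hinner, hnorm_h, hnorm_g]
  refine abs_sum_mul_le_of_le_mul_sqrt hμ0 (mul_nonneg hε (sqrt_nonneg _))
    (Aop_sq_nonneg hμ0 Q h) (Aop_sq_nonneg hμ0 Q G) fun x => ?_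
  refine (abs_Aop_mul_Aop_union_le hμ0 hε hprod hiQ (fun hi => hiT (mem_sdiff.1 hi).1)
    sdiff_disjoint hh hh0 g x).trans ?_
  exact mul_le_mul_of_nonneg_right (mul_le_mul_of_nonneg_left
    (sqrt_le_sqrt (Nat.cast_le.2 (card_le_card sdiff_subset))) hε)
    (mul_nonneg (sqrt_nonneg _) (sqrt_nonneg _))

lemma abs_inner'_Aop_union_sub_le (hμ0 : ∀ x, 0 ≤ μ x) (hε : 0 ≤ ε) (hprod : EpsProduct μ ε)
    {Q D T : Finset (Fin k)} (hDT : Disjoint D T) (hDQ : Disjoint D Q) (f : (∀ i, V i) → ℝ)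
    {g : (∀ i, V i) → ℝ} (hg : Junta T g) :
    |inner' μ (fun z => Aop μ (Q ∪ D) f z - Aop μ Q f z) g| ≤
      ε * √T.card * √D.card *
        (l2norm μ (fun z => Aop μ (Q ∪ D) f z - Aop μ Q f z) * l2norm μ g) := by
  induction D using Finset.induction_on with
  | empty => simp [inner']
  | insert l D hlD ih =>
    obtain ⟨hlT, hDT⟩ := disjoint_insert_left.1 hDT
    obtain ⟨hlQ, hDQ⟩ := disjoint_insert_left.1 hDQ
    have hQP : Q ⊆ Q ∪ D := subset_union_left
    have hlP : l ∉ Q ∪ D := by simp [hlQ, hlD]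
    set a := fun z => Aop μ (insert l (Q ∪ D)) f z - Aop μ (Q ∪ D) f z with ha
    set b := fun z => Aop μ (Q ∪ D) f z - Aop μ Q f z with hb
    have horth : inner' μ b a = 0 := inner'_eq_zero_of_junta hμ0
      ((junta_Aop μ _ f).sub ((junta_Aop μ Q f).mono hQP))
      (Aop_increment_eq_zero hμ0 subset_rfl (subset_insert l _) f)
    have hsplit :
        (fun z => Aop μ (Q ∪ insert l D) f z - Aop μ Q f z) = fun z => b z + a z := by
      funext z
      rw [ha, hb, union_insert]
      ring
    rw [hsplit, inner'_add_left, l2norm_add_of_inner'_eq_zero hμ0 horth,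
      card_insert_of_notMem hlD, Nat.cast_succ]
    have hb_le : |inner' μ b g| ≤ ε * √T.card * l2norm μ g * (√D.card * l2norm μ b) :=
      (ih hDT hDQ).trans_eq (by ring)
    have ha_le : |inner' μ a g| ≤ ε * √T.card * l2norm μ g * l2norm μ a :=
      (abs_inner'_increment_le hμ0 hε hprod hlP hlT f hg).trans_eq (by ring)
    exact (abs_add_le_mul_sqrt_succ (c := ε * √T.card * l2norm μ g)
      (mul_nonneg (mul_nonneg hε (sqrt_nonneg _)) (sqrt_nonneg _)) (Nat.cast_nonneg _)
      hb_le ha_le).trans_eq (by ring)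

lemma abs_inner'_Aop_sub_Aop_inter_le (hμ0 : ∀ x, 0 ≤ μ x) (hε : 0 ≤ ε)
    (hprod : EpsProduct μ ε) (R T : Finset (Fin k)) (f : (∀ i, V i) → ℝ)
    {g : (∀ i, V i) → ℝ} (hg : Junta T g) :
    |inner' μ (Aop μ R f) g - inner' μ (Aop μ (R ∩ T) f) g| ≤
      ε * √(R.card * T.card) * (l2norm μ f * l2norm μ g) := by
  have h := abs_inner'_Aop_union_sub_le hμ0 hε hprod (Q := R ∩ T) sdiff_disjoint
    (disjoint_sdiff_inter R T) f hg
  rw [union_comm, sdiff_union_inter, inner'_sub_left] at h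
  have hcard : ((R \ T).card : ℝ) ≤ R.card := Nat.cast_le.2 (card_le_card sdiff_subset)
  have hf := l2norm_increment_le hμ0 (inter_subset_left : R ∩ T ⊆ R) f
  refine h.trans ?_
  calc ε * √T.card * √(R \ T).card *
        (l2norm μ (fun z => Aop μ R f z - Aop μ (R ∩ T) f z) * l2norm μ g)
      ≤ ε * √T.card * √R.card * (l2norm μ f * l2norm μ g) :=
        mul_le_mul (by gcongr) (mul_le_mul_of_nonneg_right hf (sqrt_nonneg _))
          (mul_nonneg (sqrt_nonneg _) (sqrt_nonneg _)) (by positivity)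
    _ = ε * √(R.card * T.card) * (l2norm μ f * l2norm μ g) := by
        rw [sqrt_mul (Nat.cast_nonneg _)]
        ring

lemma inner'_ES (S : Finset (Fin k)) (f g : (∀ i, V i) → ℝ) :
    inner' μ (ES μ S f) g =
      ∑ R ∈ S.powerset, (-1 : ℝ) ^ (S.card - R.card) * inner' μ (Aop μ R f) g := by
  simp only [inner', ES, sum_mul, mul_sum]
  rw [sum_comm]
  exact sum_congr rfl fun R _ => sum_congr rfl fun x _ => by ring

end Links

theorem statement13_general (k : ℕ)
    (V : Fin k → Type) [∀ i, Fintype (V i)] [∀ i, DecidableEq (V i)]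
    (μ : (∀ i, V i) → ℝ) (ε : ℝ) (hε : 0 ≤ ε) (hμ : IsProb μ) (hprod : EpsProduct μ ε)
    (S T : Finset (Fin k)) (hST : ¬ S ⊆ T)
    (f g : (∀ i, V i) → ℝ) (hg : Junta T g) :
    inner' μ (ES μ S f) g ≤
      ε * Real.sqrt ((S.card : ℝ) * T.card) * 2 ^ S.card * l2norm μ f * l2norm μ g := by
  obtain ⟨i, hiS, hiT⟩ := not_subset.1 hST
  have hcancel := sum_powerset_neg_one_pow_mul_inter_eq_zero hiS hiT
    fun R => inner' μ (Aop μ R f) g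
  have hterm : ∀ R ∈ S.powerset,
      |inner' μ (Aop μ R f) g - inner' μ (Aop μ (R ∩ T) f) g| ≤
        ε * √(S.card * T.card) * (l2norm μ f * l2norm μ g) := fun R hR => by
    have hcard : (R.card : ℝ) ≤ S.card := Nat.cast_le.2 (card_le_card (mem_powerset.1 hR))
    refine (abs_inner'_Aop_sub_Aop_inter_le hμ.1 hε hprod R T f hg).trans ?_
    gcongr
    exact mul_nonneg (sqrt_nonneg _) (sqrt_nonneg _)
  calc inner' μ (ES μ S f) g
      = ∑ R ∈ S.powerset, (-1 : ℝ) ^ (S.card - R.card) *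
          (inner' μ (Aop μ R f) g - inner' μ (Aop μ (R ∩ T) f) g) := by
        rw [inner'_ES]
        simp only [mul_sub, sum_sub_distrib, hcancel, sub_zero]
    _ ≤ ∑ _R ∈ S.powerset, ε * √(S.card * T.card) * (l2norm μ f * l2norm μ g) :=
        sum_le_sum fun R hR => (le_abs_self _).trans <| by
          rw [abs_mul, abs_neg_one_pow, one_mul]
          exact hterm R hR
    _ = ε * √(S.card * T.card) * 2 ^ S.card * l2norm μ f * l2norm μ g := by
        rw [sum_const, card_powerset, nsmul_eq_mul]
        push_cast
        ring

theorem statement13 (k : ℕ) (hk : 1 ≤ k)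
    (V : Fin k → Type) [∀ i, Fintype (V i)] [∀ i, DecidableEq (V i)]
    (μ : (∀ i, V i) → ℝ) (ε : ℝ) (hε : 0 ≤ ε) (hμ : IsProb μ) (hprod : EpsProduct μ ε)
    (S T : Finset (Fin k)) (hST : ¬ S ⊆ T)
    (f g : (∀ i, V i) → ℝ) (hg : Junta T g) :
    inner' μ (ES μ S f) g ≤
      ε * Real.sqrt ((S.card : ℝ) * T.card) * 2 ^ S.card * l2norm μ f * l2norm μ g :=
  statement13_general k V μ ε hε hμ hprod S T hST f g hg

end GLL
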